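/- arXiv:1706.03928 — 2 statements merged into one kernel-verified Lean document; each statement's English description precedes it below -/
import Mathlib

section
/- Let P be a closed, convex, spanning, pointed cone in ℝⁿ with Ω = int(P) and Ω* = int(P*). The linear span of the functions {x ↦ e^{-⟨a,x⟩} : a ∈ Ω*} is dense in C₀(P), the continuous functions on P vanishing at infinity, with respect to the uniform norm. -/
/-!
Extension by zero identifies `C₀(P)` with the continuous functions on the one-point
compactification `P ∪ {∞}` vanishing at `∞`. The exponentials `e_a(x) = exp (-⟪a, x⟫)`,
`a ∈ int P*`, are closed under products (`e_a e_b = e_{a+b}`) and conjugation, vanish at `∞`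
because `⟪a, x⟫ ≥ δ ‖x‖` on `P`, and separate the points of `P ∪ {∞}` since `int P*` is a
nonempty open set; it is nonempty because `P = P**` is pointed. By Stone–Weierstrass the unital
algebra they generate is dense, so its elements vanishing at `∞`, which form their linear span,
are dense among the functions vanishing at `∞`.
-/

open Filter Topology Submodule RealInnerProductSpace OnePoint

namespace StarAlgebra

variable {R A : Type*} [CommSemiring R] [StarRing R] [Semiring A] [StarRing A] [Algebra R A]
  [StarModule R A] {s : Set A}

theorem adjoin_le_span_insert_one (hmul : ∀ a ∈ s, ∀ b ∈ s, a * b ∈ s)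
    (hstar : ∀ a ∈ s, star a ∈ s) :
    Subalgebra.toSubmodule (adjoin R s).toSubalgebra ≤ span R (insert 1 s) := by
  have hs : s ∪ star s = s :=
    Set.union_eq_self_of_subset_right fun a ha => by simpa using hstar _ ha
  rw [adjoin_eq_span, hs, span_le]
  intro a ha
  refine subset_span ?_
  induction ha using Submonoid.closure_induction with
  | mem a ha => exact Or.inr ha
  | one => exact Or.inl rfl
  | mul a b _ _ ha hb =>
    rcases ha with rfl | ha
    · rwa [one_mul]
    rcases hb with rfl | hb
    · rw [mul_one]; exact Or.inr ha
    exact Or.inr (hmul a ha b hb)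

theorem adjoin_inter_ker_subset_span (hmul : ∀ a ∈ s, ∀ b ∈ s, a * b ∈ s)
    (hstar : ∀ a ∈ s, star a ∈ s) (φ : A →ₐ[R] R) (hφ : ∀ a ∈ s, φ a = 0) :
    (adjoin R s : Set A) ∩ RingHom.ker φ ⊆ span R s := by
  rintro a ⟨ha, hφa⟩
  obtain ⟨c, b, hb, rfl⟩ := mem_span_insert.1 (adjoin_le_span_insert_one hmul hstar ha)
  have hφb : φ b = 0 := span_le (p := LinearMap.ker φ.toLinearMap) |>.2 hφ hb
  have hc : c = 0 := by simpa [hφb] using hφa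
  simpa [hc] using hb

end StarAlgebra

theorem ContinuousMap.mem_closure_span_of_separatesPoints {Y 𝕜 : Type*} [TopologicalSpace Y]
    [CompactSpace Y] [RCLike 𝕜] {S : Set C(Y, 𝕜)} {y₀ : Y}
    (hmul : ∀ F ∈ S, ∀ G ∈ S, F * G ∈ S) (hstar : ∀ F ∈ S, star F ∈ S)
    (hsep : (StarAlgebra.adjoin 𝕜 S).SeparatesPoints) (hS : ∀ F ∈ S, F y₀ = 0)
    {F : C(Y, 𝕜)} (hF : F y₀ = 0) : F ∈ closure (span 𝕜 S : Set C(Y, 𝕜)) := by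
  have hdense : closure (StarAlgebra.adjoin 𝕜 S : Set C(Y, 𝕜)) = Set.univ := by
    rw [← StarSubalgebra.topologicalClosure_coe,
      starSubalgebra_topologicalClosure_eq_top_of_separatesPoints _ hsep, StarSubalgebra.coe_top]
  have hker := ContinuousMap.AlgHom.closure_ker_inter (evalAlgHom 𝕜 𝕜 y₀)
    (continuous_eval_const y₀) (StarAlgebra.adjoin 𝕜 S)
  refine closure_mono
    (StarAlgebra.adjoin_inter_ker_subset_span hmul hstar (evalAlgHom 𝕜 𝕜 y₀) hS) ?_
  rw [hker, hdense]
  exact ⟨trivial, hF⟩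

namespace OnePoint

variable {X Y : Type*} [TopologicalSpace X] [R1Space X] [TopologicalSpace Y]

theorem exists_continuousMap_comp_coe_eq {g : X → Y} (hg : Continuous g) {y : Y}
    (hgy : Tendsto g (cocompact X) (𝓝 y)) : ∃ F : C(OnePoint X, Y), F ∞ = y ∧ F ∘ (↑) = g :=
  ⟨continuousMapMk ⟨g, hg⟩ y (by rwa [coclosedCompact_eq_cocompact]), rfl, rfl⟩

theorem exists_continuousMap_ne_of_separatesPoints [Zero Y] {S : Set (X → Y)}
    (hcont : ∀ g ∈ S, Continuous g) (hzero : ∀ g ∈ S, Tendsto g (cocompact X) (𝓝 0))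
    (hsep : ∀ x y, x ≠ y → ∃ g ∈ S, g x ≠ g y) (hne : ∀ x, ∃ g ∈ S, g x ≠ 0)
    {p q : OnePoint X} (hpq : p ≠ q) :
    ∃ F : C(OnePoint X, Y), (F ∞ = 0 ∧ F ∘ (↑) ∈ S) ∧ F p ≠ F q := by
  have hlift : ∀ g ∈ S, ∃ F : C(OnePoint X, Y), (F ∞ = 0 ∧ F ∘ (↑) ∈ S) ∧ F ∘ (↑) = g :=
    fun g hg =>
      let ⟨F, hF, hFg⟩ := exists_continuousMap_comp_coe_eq (hcont g hg) (hzero g hg)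
      ⟨F, ⟨hF, hFg ▸ hg⟩, hFg⟩
  induction q using OnePoint.rec with
  | infty =>
    induction p using OnePoint.rec with
    | infty => exact absurd rfl hpq
    | coe x =>
      obtain ⟨g, hg, hgx⟩ := hne x
      obtain ⟨F, hF, rfl⟩ := hlift g hg
      exact ⟨F, hF, by rwa [hF.1]⟩
  | coe y =>
    induction p using OnePoint.rec with
    | infty =>
      obtain ⟨g, hg, hgy⟩ := hne y
      obtain ⟨F, hF, rfl⟩ := hlift g hg
      exact ⟨F, hF, by rw [hF.1]; exact hgy.symm⟩
    | coe x =>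
      obtain ⟨g, hg, hgxy⟩ := hsep x y (by rintro rfl; exact hpq rfl)
      obtain ⟨F, hF, rfl⟩ := hlift g hg
      exact ⟨F, hF, hgxy⟩

end OnePoint

theorem exists_mem_span_norm_sub_lt_of_separatesPoints {X 𝕜 : Type*} [TopologicalSpace X]
    [R1Space X] [RCLike 𝕜] {S : Set (X → 𝕜)}
    (hcont : ∀ g ∈ S, Continuous g) (hzero : ∀ g ∈ S, Tendsto g (cocompact X) (𝓝 0))
    (hmul : ∀ g ∈ S, ∀ h ∈ S, g * h ∈ S) (hstar : ∀ g ∈ S, star g ∈ S)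
    (hsep : ∀ x y, x ≠ y → ∃ g ∈ S, g x ≠ g y) (hne : ∀ x, ∃ g ∈ S, g x ≠ 0)
    {f : X → 𝕜} (hf : Continuous f) (hf0 : Tendsto f (cocompact X) (𝓝 0)) {ε : ℝ} (hε : 0 < ε) :
    ∃ g ∈ span 𝕜 S, ∀ x, ‖f x - g x‖ < ε := by
  set S' : Set C(OnePoint X, 𝕜) := {F | F ∞ = 0 ∧ F ∘ (↑) ∈ S}
  have hmul' : ∀ F ∈ S', ∀ G ∈ S', F * G ∈ S' := fun F hF G hG =>
    ⟨by simp [hF.1], hmul _ hF.2 _ hG.2⟩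
  have hstar' : ∀ F ∈ S', star F ∈ S' := fun F hF => ⟨by simp [hF.1], hstar _ hF.2⟩
  have hsep' : (StarAlgebra.adjoin 𝕜 S').SeparatesPoints := fun p q hpq =>
    let ⟨F, hF, hFpq⟩ := exists_continuousMap_ne_of_separatesPoints hcont hzero hsep hne hpq
    ⟨F, ⟨F, StarAlgebra.subset_adjoin 𝕜 S' hF, rfl⟩, hFpq⟩
  have hrestrict : ∀ G ∈ span 𝕜 S', ⇑G ∘ ((↑) : X → OnePoint X) ∈ span 𝕜 S := by
    intro G hG
    induction hG using span_induction with
    | mem G hG => exact subset_span hG.2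
    | zero => exact zero_mem _
    | add G H _ _ hG hH => exact add_mem hG hH
    | smul c G _ hG => exact smul_mem _ c hG
  obtain ⟨F, hF, rfl⟩ := exists_continuousMap_comp_coe_eq hf hf0
  obtain ⟨G, hG, hFG⟩ := Metric.mem_closure_iff.1
    (ContinuousMap.mem_closure_span_of_separatesPoints hmul' hstar' hsep' (fun F hF => hF.1) hF)
    ε hε
  refine ⟨G ∘ (↑), hrestrict G hG, fun x => ?_⟩
  rw [← dist_eq_norm]
  exact (ContinuousMap.dist_apply_le_dist (x : OnePoint X)).trans_lt hFG

theorem Convex.add_mem_of_smul_mem {E : Type*} [AddCommGroup E] [Module ℝ E] {s : Set E}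
    (hs : Convex ℝ s) (hsmul : ∀ c : ℝ, 0 ≤ c → ∀ x ∈ s, c • x ∈ s) {x y : E} (hx : x ∈ s)
    (hy : y ∈ s) : x + y ∈ s := by
  have hmid := hsmul 2 zero_le_two _ (hs hx hy (by norm_num : (0 : ℝ) ≤ 1 / 2)
    (by norm_num : (0 : ℝ) ≤ 1 / 2) (by norm_num))
  rwa [smul_add, smul_smul, smul_smul, show (2 : ℝ) * (1 / 2) = 1 by norm_num, one_smul,
    one_smul] at hmid

theorem exists_mem_inner_ne_of_isOpen {E : Type*} [NormedAddCommGroup E] [InnerProductSpace ℝ E]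
    {U : Set E} (hU : IsOpen U) (hne : U.Nonempty) {x y : E} (hxy : x ≠ y) :
    ∃ a ∈ U, ⟪a, x⟫ ≠ ⟪a, y⟫ := by
  by_contra! h
  have hU_le : U ⊆ LinearMap.ker (innerₗ E (x - y)) := fun a ha => by
    rw [SetLike.mem_coe, LinearMap.mem_ker, innerₗ_apply_apply, inner_sub_left, real_inner_comm a x,
      real_inner_comm a y, h a ha, sub_self]
  have htop := (LinearMap.ker (innerₗ E (x - y))).eq_top_of_nonempty_interior'
    (hne.mono (hU.interior_eq ▸ interior_mono hU_le))
  have hxy0 : ⟪x - y, x - y⟫ = 0 := LinearMap.mem_ker.1 (htop ▸ Submodule.mem_top : x - y ∈ _)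
  exact hxy (sub_eq_zero.1 (inner_self_eq_zero.1 hxy0))

namespace ProperCone

section TopologicalModule

variable {E : Type*} [AddCommGroup E] [TopologicalSpace E] [Module ℝ E]

def ofIsClosed {s : Set E} (hs : IsClosed s) (hconv : Convex ℝ s)
    (hsmul : ∀ c : ℝ, 0 ≤ c → ∀ x ∈ s, c • x ∈ s) (h0 : 0 ∈ s) : ProperCone ℝ E where
  carrier := s
  zero_mem' := h0
  add_mem' := hconv.add_mem_of_smul_mem hsmul
  smul_mem' c _ hx := hsmul c c.2 _ hx
  isClosed' := hs

theorem add_mem_interior [ContinuousAdd E] {C : ProperCone ℝ E} {a b : E}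
    (ha : a ∈ interior (C : Set E)) (hb : b ∈ C) : a + b ∈ interior (C : Set E) :=
  interior_mono (by rintro _ ⟨x, hx, y, hy, rfl⟩; exact C.add_mem hx hy)
    (subset_interior_add_left (Set.add_mem_add ha hb))

end TopologicalModule

section InnerProductSpace

variable {E : Type*} [NormedAddCommGroup E] [InnerProductSpace ℝ E] [CompleteSpace E]

theorem interior_innerDual_nonempty [FiniteDimensional ℝ E] (C : ProperCone ℝ E)
    (hC : (C ∩ -C : Set E) = {0}) : (interior (innerDual (C : Set E) : Set E)).Nonempty := by
  set K := innerDual (C : Set E)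
  have hmem : ∀ w, (∀ u ∈ K, ⟪u, w⟫ = 0) → w ∈ C := fun w hw => by
    rw [← innerDual_innerDual C]
    exact fun u hu => (hw u hu).ge
  have hspan : span ℝ (K : Set E) = ⊤ := by
    rw [← orthogonal_eq_bot_iff, eq_bot_iff]
    intro v hv
    have hvK : ∀ u ∈ K, ⟪u, v⟫ = 0 := fun u hu => (mem_orthogonal _ v).1 hv u (subset_span hu)
    have hv0 : v ∈ (C ∩ -C : Set E) :=
      ⟨hmem v hvK, hmem (-v) fun u hu => by rw [inner_neg_right, hvK u hu, neg_zero]⟩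
    rw [hC] at hv0
    exact hv0
  have hK0 : insert 0 (K : Set E) = K := Set.insert_eq_of_mem K.zero_mem
  rw [K.convex.interior_nonempty_iff_affineSpan_eq_top, ← AffineSubspace.coe_eq_univ_iff, ← hK0,
    affineSpan_insert_zero, hspan, top_coe]

theorem exists_pos_mul_norm_le_inner_of_mem_interior_innerDual {s : Set E} {a : E}
    (ha : a ∈ interior (innerDual s : Set E)) : ∃ δ > 0, ∀ x ∈ s, δ * ‖x‖ ≤ ⟪x, a⟫ := by
  obtain ⟨δ, hδ, hball⟩ := Metric.isOpen_iff.1 isOpen_interior a ha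
  refine ⟨δ / 2, half_pos hδ, fun x hx => ?_⟩
  rcases eq_or_ne x 0 with rfl | hx0
  · simp
  have hnx : 0 < ‖x‖ := norm_pos_iff.2 hx0
  have hshift : a - (δ / 2 / ‖x‖) • x ∈ innerDual s := by
    refine interior_subset (hball ?_)
    rw [Metric.mem_ball, dist_eq_norm, sub_sub_cancel_left, norm_neg, norm_smul, Real.norm_eq_abs,
      abs_of_pos (by positivity), div_mul_cancel₀ _ hnx.ne']
    exact half_lt_self hδ
  have hinner := mem_innerDual.1 hshift hx
  rw [inner_sub_right, real_inner_smul_right, real_inner_self_eq_norm_sq] at hinner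
  have hsq : δ / 2 / ‖x‖ * ‖x‖ ^ 2 = δ / 2 * ‖x‖ := by field_simp
  linarith

theorem tendsto_inner_cocompact_atTop [ProperSpace E] {s : Set E} (hs : IsClosed s) {a : E}
    (ha : a ∈ interior (innerDual s : Set E)) :
    Tendsto (fun x : s => ⟪(x : E), a⟫) (cocompact s) atTop := by
  obtain ⟨δ, hδ, hle⟩ := exists_pos_mul_norm_le_inner_of_mem_interior_innerDual ha
  have hnorm : Tendsto (fun x : s => ‖(x : E)‖) (cocompact s) atTop :=
    tendsto_norm_cocompact_atTop.comp hs.isClosedEmbedding_subtypeVal.tendsto_cocompact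
  exact tendsto_atTop_mono (fun x => hle x x.2) (hnorm.const_mul_atTop hδ)

end InnerProductSpace

end ProperCone

section DualExponentials

variable {E : Type*} [NormedAddCommGroup E] [InnerProductSpace ℝ E] [CompleteSpace E]

def dualExponentials (s : Set E) : Set (s → ℂ) :=
  {g | ∃ a ∈ interior (ProperCone.innerDual s : Set E),
    g = fun x : s => Complex.exp (-((⟪a, (x : E)⟫ : ℝ) : ℂ))}

variable {s : Set E}

theorem continuous_of_mem_dualExponentials {g : s → ℂ} (hg : g ∈ dualExponentials s) :
    Continuous g := by
  obtain ⟨a, -, rfl⟩ := hg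
  fun_prop

theorem tendsto_cocompact_of_mem_dualExponentials [ProperSpace E] (hs : IsClosed s) {g : s → ℂ}
    (hg : g ∈ dualExponentials s) : Tendsto g (cocompact s) (𝓝 0) := by
  obtain ⟨a, ha, rfl⟩ := hg
  have hexp := (Complex.continuous_ofReal.tendsto 0).comp
    (Real.tendsto_exp_neg_atTop_nhds_zero.comp (ProperCone.tendsto_inner_cocompact_atTop hs ha))
  rw [Complex.ofReal_zero] at hexp
  refine hexp.congr fun x => ?_
  simp [Complex.ofReal_exp, real_inner_comm]

theorem mul_mem_dualExponentials {g h : s → ℂ} (hg : g ∈ dualExponentials s)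
    (hh : h ∈ dualExponentials s) : g * h ∈ dualExponentials s := by
  obtain ⟨a, ha, rfl⟩ := hg
  obtain ⟨b, hb, rfl⟩ := hh
  refine ⟨a + b, ProperCone.add_mem_interior ha (interior_subset hb), funext fun x => ?_⟩
  simp only [Pi.mul_apply, ← Complex.exp_add, inner_add_left, Complex.ofReal_add, neg_add]

theorem star_mem_dualExponentials {g : s → ℂ} (hg : g ∈ dualExponentials s) :
    star g ∈ dualExponentials s := by
  obtain ⟨a, ha, rfl⟩ := hg
  refine ⟨a, ha, funext fun x => ?_⟩
  simp [← Complex.exp_conj]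

theorem exists_mem_dualExponentials_ne
    (hne : (interior (ProperCone.innerDual s : Set E)).Nonempty) {x y : s} (hxy : x ≠ y) :
    ∃ g ∈ dualExponentials s, g x ≠ g y := by
  obtain ⟨a, ha, haxy⟩ := exists_mem_inner_ne_of_isOpen isOpen_interior hne
    (Subtype.coe_ne_coe.2 hxy)
  refine ⟨_, ⟨a, ha, rfl⟩, fun h => haxy ?_⟩
  simpa [← Complex.ofReal_neg, ← Complex.ofReal_exp] using h

theorem exists_mem_dualExponentials_ne_zero
    (hne : (interior (ProperCone.innerDual s : Set E)).Nonempty) (x : s) :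
    ∃ g ∈ dualExponentials s, g x ≠ 0 :=
  let ⟨a, ha⟩ := hne
  ⟨_, ⟨a, ha, rfl⟩, Complex.exp_ne_zero _⟩

end DualExponentials

theorem exponentials_span_dense_in_C0_general
    (n : ℕ) (P : Set (EuclideanSpace ℝ (Fin n)))
    (hclosed : IsClosed P) (hconv : Convex ℝ P)
    (hcone : ∀ c : ℝ, 0 ≤ c → ∀ x ∈ P, c • x ∈ P)
    (hpointed : P ∩ (-P) = {0})
    (f : ↥P → ℂ) (hf : Continuous f)
    (hf0 : Tendsto f (cocompact ↥P) (nhds 0))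
    (ε : ℝ) (hε : 0 < ε) :
    ∃ g ∈ Submodule.span ℂ
      {g : ↥P → ℂ | ∃ a ∈ interior {u : EuclideanSpace ℝ (Fin n) | ∀ z ∈ P, 0 ≤ ⟪u, z⟫},
        g = fun x : ↥P => Complex.exp (-((⟪a, (x : EuclideanSpace ℝ (Fin n))⟫ : ℝ) : ℂ))},
      ∀ x : ↥P, ‖f x - g x‖ ≤ ε := by
  have hdual : {u : EuclideanSpace ℝ (Fin n) | ∀ z ∈ P, 0 ≤ ⟪u, z⟫} =
      ProperCone.innerDual P := by
    ext u
    simp [real_inner_comm u]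
  have hint : (interior (ProperCone.innerDual P : Set (EuclideanSpace ℝ (Fin n)))).Nonempty :=
    (ProperCone.ofIsClosed hclosed hconv hcone (hpointed.ge rfl).1).interior_innerDual_nonempty
      hpointed
  obtain ⟨g, hg, hfg⟩ := exists_mem_span_norm_sub_lt_of_separatesPoints
    (fun _ => continuous_of_mem_dualExponentials)
    (fun _ => tendsto_cocompact_of_mem_dualExponentials hclosed)
    (fun _ hg _ hh => mul_mem_dualExponentials hg hh) (fun _ => star_mem_dualExponentials)
    (fun _ _ => exists_mem_dualExponentials_ne hint) (exists_mem_dualExponentials_ne_zero hint)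
    hf hf0 hε
  rw [hdual]
  exact ⟨g, hg, fun x => (hfg x).le⟩

theorem exponentials_span_dense_in_C0
    (n : ℕ) (P : Set (EuclideanSpace ℝ (Fin n)))
    (hclosed : IsClosed P) (hconv : Convex ℝ P)
    (hcone : ∀ c : ℝ, 0 ≤ c → ∀ x ∈ P, c • x ∈ P)
    (hspan : ∀ v : EuclideanSpace ℝ (Fin n), ∃ x ∈ P, ∃ y ∈ P, v = x - y)
    (hpointed : P ∩ (-P) = {0})
    (f : ↥P → ℂ) (hf : Continuous f)
    (hf0 : Tendsto f (cocompact ↥P) (nhds 0))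
    (ε : ℝ) (hε : 0 < ε) :
    ∃ g ∈ Submodule.span ℂ
      {g : ↥P → ℂ | ∃ a ∈ interior {u : EuclideanSpace ℝ (Fin n) | ∀ z ∈ P, 0 ≤ ⟪u, z⟫},
        g = fun x : ↥P => Complex.exp (-((⟪a, (x : EuclideanSpace ℝ (Fin n))⟫ : ℝ) : ℂ))},
      ∀ x : ↥P, ‖f x - g x‖ ≤ ε :=
  exponentials_span_dense_in_C0_general n P hclosed hconv hcone hpointed f hf hf0 ε hε
end

section
/- Let α = {α_x : x ∈ P} be a semigroup of unital normal *-endomorphisms of B(H) (H an infinite-dimensional separable Hilbert space) indexed by a closed, convex, spanning, pointed cone P ⊆ ℝⁿ with interior Ω. If there exists s ∈ Ω such that α_s is an automorphism, then α_x is an automorphism for every x ∈ P. -/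
/-- A functional on B(H) is σ-weakly continuous if it is given by a trace-class
pairing. -/
def SigmaWeaklyContinuous {H : Type*} [NormedAddCommGroup H] [InnerProductSpace ℂ H]
    (φ : (H →L[ℂ] H) → ℂ) : Prop :=
  ∃ ξ η : ℕ → H, Summable (fun i => ‖ξ i‖ * ‖η i‖) ∧
    ∀ A : H →L[ℂ] H, φ A = ∑' i, (inner ℂ (ξ i) (A (η i)) : ℂ)

/-! Given `x ∈ P`, the point `u = x / m` lies in `P` and, for `m` large, so does `s - u`, since `s`
is interior. Then `α s = α u ∘ α (s - u) = α (s - u) ∘ α u` forces `α u` to be bijective, and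
`α x = (α u)^m`. -/

open Filter Topology

section SemigroupOnCone

variable {E X : Type*} [AddCommMonoid E] {P : Set E} {α : E → X → X}

theorem bijective_of_bijective_add
    (hsemi : ∀ x ∈ P, ∀ y ∈ P, α (x + y) = α x ∘ α y)
    {u v : E} (hu : u ∈ P) (hv : v ∈ P) (h : Function.Bijective (α (u + v))) :
    Function.Bijective (α u) := by
  have hvu : Function.Bijective (α v ∘ α u) := by rwa [← hsemi v hv u hu, add_comm]
  rw [hsemi u hu v hv] at h
  exact ⟨hvu.injective.of_comp, h.surjective.of_comp⟩

theorem bijective_succ_nsmul_of_bijective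
    (hsemi : ∀ x ∈ P, ∀ y ∈ P, α (x + y) = α x ∘ α y)
    {u : E} (hu : ∀ k : ℕ, k • u ∈ P) (h : Function.Bijective (α u)) (k : ℕ) :
    Function.Bijective (α ((k + 1) • u)) := by
  induction k with
  | zero => rwa [zero_add, one_smul]
  | succ k ih =>
    rw [succ_nsmul, hsemi _ (hu (k + 1)) _ (by simpa using hu 1)]
    exact ih.comp h

end SemigroupOnCone

theorem eventually_sub_inv_natCast_smul_mem
    {E : Type*} [AddCommGroup E] [Module ℝ E] [TopologicalSpace E] [IsTopologicalAddGroup E]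
    [ContinuousSMul ℝ E] {P : Set E} {s : E} (hs : s ∈ interior P) (x : E) :
    ∀ᶠ m : ℕ in atTop, s - (m : ℝ)⁻¹ • x ∈ P := by
  have hlim : Tendsto (fun m : ℕ => s - (m : ℝ)⁻¹ • x) atTop (𝓝 s) := by
    simpa using tendsto_const_nhds.sub ((tendsto_inv_atTop_nhds_zero_nat (𝕜 := ℝ)).smul_const x)
  exact hlim (mem_interior_iff_mem_nhds.mp hs)

theorem automorphism_at_interior_point_implies_all_general
    (n : ℕ) (P : Set (EuclideanSpace ℝ (Fin n)))
    (hcone : ∀ c : ℝ, 0 ≤ c → ∀ x ∈ P, c • x ∈ P)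
    {H : Type*} [NormedAddCommGroup H] [InnerProductSpace ℂ H] [CompleteSpace H]
    (α : EuclideanSpace ℝ (Fin n) → ((H →L[ℂ] H) →⋆ₐ[ℂ] (H →L[ℂ] H)))
    (hsemi : ∀ x ∈ P, ∀ y ∈ P, α (x + y) = (α x).comp (α y))
    (s : EuclideanSpace ℝ (Fin n)) (hs : s ∈ interior P)
    (hauto : Function.Bijective (α s)) :
    ∀ x ∈ P, Function.Bijective (α x) := by
  intro x hx
  obtain ⟨m, hmem⟩ := (eventually_sub_inv_natCast_smul_mem hs x).exists_forall_of_atTop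
  set u := ((m : ℝ) + 1)⁻¹ • x
  have hu : ∀ k : ℕ, k • u ∈ P := fun k => by
    rw [← Nat.cast_smul_eq_nsmul ℝ]
    exact hcone _ k.cast_nonneg _ (hcone _ (by positivity) x hx)
  have hsemi_coe : ∀ x ∈ P, ∀ y ∈ P, ⇑(α (x + y)) = α x ∘ α y :=
    fun x hx y hy => congrArg DFunLike.coe (hsemi x hx y hy)
  have hsu : s - u ∈ P := by simpa [u] using hmem (m + 1) m.le_succ
  have hbij_u : Function.Bijective (α u) := by
    refine bijective_of_bijective_add (α := fun x => ⇑(α x)) hsemi_coe (by simpa using hu 1) hsu ?_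
    rwa [add_sub_cancel]
  have hx_eq : (m + 1) • u = x := by
    rw [← Nat.cast_smul_eq_nsmul ℝ, smul_smul]
    push_cast
    rw [mul_inv_cancel₀ (by positivity), one_smul]
  rw [← hx_eq]
  exact bijective_succ_nsmul_of_bijective (α := fun x => ⇑(α x)) hsemi_coe hu hbij_u m

theorem automorphism_at_interior_point_implies_all
    (n : ℕ) (P : Set (EuclideanSpace ℝ (Fin n)))
    (hclosed : IsClosed P) (hconv : Convex ℝ P)
    (hcone : ∀ c : ℝ, 0 ≤ c → ∀ x ∈ P, c • x ∈ P)
    (hspan : ∀ v : EuclideanSpace ℝ (Fin n), ∃ x ∈ P, ∃ y ∈ P, v = x - y)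
    (hpointed : P ∩ (-P) = {0})
    {H : Type*} [NormedAddCommGroup H] [InnerProductSpace ℂ H] [CompleteSpace H]
    [TopologicalSpace.SeparableSpace H] (hinf : ¬ FiniteDimensional ℂ H)
    (α : EuclideanSpace ℝ (Fin n) → ((H →L[ℂ] H) →⋆ₐ[ℂ] (H →L[ℂ] H)))
    (hsemi : ∀ x ∈ P, ∀ y ∈ P, α (x + y) = (α x).comp (α y))
    (hnormal : ∀ x ∈ P, ∀ φ : (H →L[ℂ] H) → ℂ, SigmaWeaklyContinuous φ →
      SigmaWeaklyContinuous (fun A => φ (α x A)))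
    (s : EuclideanSpace ℝ (Fin n)) (hs : s ∈ interior P)
    (hauto : Function.Bijective (α s)) :
    ∀ x ∈ P, Function.Bijective (α x) :=
  automorphism_at_interior_point_implies_all_general n P hcone α hsemi s hs hauto
end
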